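/- arXiv:2312.09595 — 3 statements merged into one kernel-verified Lean document; each statement's English description precedes it below -/
import Mathlib

section
/- Tighter Core-set loss bound via average radial distances (Theorem 2). Let π : X → Fin b be a measurable nearest-point selector, i.e. dist(x, x̃(π x)) = min_{k∈Fin b} dist(x, x̃ k) for every x ∈ X, with coverage areas N(k) = π⁻¹{k}, and define the average radial distance δ_s(k) = (μ(N(k)))⁻¹ ∫_{N(k)} dist(x, x̃ k) dμ(x) if μ(N(k)) > 0 and δ_s(k) = 0 otherwise; assume each δ_s(k) is finite. Let (Ω, P) be a probability space, n ≥ 1, and W_1, …, W_n : Ω → X × Fin C i.i.d. random variables with law ν. Then for every γ ∈ (0,1), with probability at least 1 − γ, (1/n) ∑_{t=1}^n ℓ((W_t).1, (W_t).2) ≤ (max_{k∈Fin b} δ_s(k))·(λl + λη·L·C) + sqrt(L²·log(1/γ)/(2n)). -/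
open MeasureTheory ProbabilityTheory ENNReal
open scoped NNReal

/-!
Under `ν` the expected loss is `∫ ∑_c η_c(x) ℓ(x, c) dμ(x)`. Writing
`η_c(x) = η_c(x̃) + (η_c(x) - η_c(x̃))` for the selected point `x̃ = x̃(π x)`, at which `ℓ`
vanishes, the Lipschitz bounds give `∑_c η_c(x) ℓ(x, c) ≤ (λl + λη L C) dist(x, x̃)`;
integrating over the coverage areas bounds the expected loss by `(max_k δ_s(k)) (λl + λη L C)`.
The losses `ℓ(W_t)` are independent, `[0, L]`-valued and have this mean, so Hoeffding's
inequality adds the deviation term `√(L² log(1/γ) / (2n))`.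
-/

section Fibers

variable {α κ : Type*} [MeasurableSpace α] [Fintype κ] [MeasurableSpace κ]
  [MeasurableSingletonClass κ] {μ : Measure α} {π : α → κ}

theorem integral_eq_sum_setIntegral_preimage_singleton (hπ : Measurable π) {f : α → ℝ}
    (hf : ∀ k, IntegrableOn f (π ⁻¹' {k}) μ) :
    ∫ x, f x ∂μ = ∑ k, ∫ x in π ⁻¹' {k}, f x ∂μ := by
  rw [← setIntegral_univ, ← Set.preimage_univ (f := π), ← Set.iUnion_of_singleton,
    Set.preimage_iUnion]
  exact integral_iUnion_fintype (fun k => hπ (measurableSet_singleton k))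
    (pairwise_disjoint_fiber π) hf

theorem integrable_comp_of_integrableOn_preimage_singleton (hπ : Measurable π)
    {g : κ → α → ℝ} (hg : ∀ k, IntegrableOn (g k) (π ⁻¹' {k}) μ) :
    Integrable (fun x => g (π x) x) μ := by
  rw [← integrableOn_univ, ← Set.preimage_univ (f := π), ← Set.iUnion_of_singleton,
    Set.preimage_iUnion]
  exact integrableOn_finite_iUnion.2 fun k => (hg k).congr_fun
    (fun x hx => congrArg (g · x) (hx : π x = k).symm) (hπ (measurableSet_singleton k))

theorem integral_le_iSup_fiberAverage [IsProbabilityMeasure μ] (hπ : Measurable π)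
    {g : κ → α → ℝ} (hg : ∀ k, IntegrableOn (g k) (π ⁻¹' {k}) μ) {δ : κ → ℝ}
    (hδ : ∀ k, 0 < μ (π ⁻¹' {k}) →
      δ k = (μ (π ⁻¹' {k})).toReal⁻¹ * ∫ x in π ⁻¹' {k}, g k x ∂μ) :
    ∫ x, g (π x) x ∂μ ≤ ⨆ k, δ k := by
  have hfiber : ∀ k, MeasurableSet (π ⁻¹' {k}) := fun k => hπ (measurableSet_singleton k)
  have hpiece : ∀ k, ∫ x in π ⁻¹' {k}, g (π x) x ∂μ = μ.real (π ⁻¹' {k}) * δ k := by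
    intro k
    rw [setIntegral_congr_fun (hfiber k) fun x hx => congrArg (g · x) (hx : π x = k)]
    by_cases hk : 0 < μ (π ⁻¹' {k})
    · rw [hδ k hk, ← mul_assoc, measureReal_def,
        mul_inv_cancel₀ (ENNReal.toReal_ne_zero.2 ⟨hk.ne', measure_ne_top μ _⟩), one_mul]
    · have hk0 : μ (π ⁻¹' {k}) = 0 := nonpos_iff_eq_zero.1 (not_lt.1 hk)
      rw [Measure.restrict_eq_zero.2 hk0, integral_zero_measure, measureReal_def, hk0,
        ENNReal.toReal_zero, zero_mul]
  have hmass : ∑ k, μ.real (π ⁻¹' {k}) = 1 := by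
    rw [sum_measureReal_preimage_singleton _ fun k _ => hfiber k, Finset.coe_univ,
      Set.preimage_univ, probReal_univ]
  calc ∫ x, g (π x) x ∂μ = ∑ k, μ.real (π ⁻¹' {k}) * δ k := by
        rw [integral_eq_sum_setIntegral_preimage_singleton hπ fun k =>
          (integrable_comp_of_integrableOn_preimage_singleton hπ hg).integrableOn]
        exact Finset.sum_congr rfl fun k _ => hpiece k
    _ ≤ ∑ k, μ.real (π ⁻¹' {k}) * ⨆ k, δ k := by
        gcongr with k
        exact le_ciSup (Set.finite_range δ).bddAbove k
    _ = ⨆ k, δ k := by rw [← Finset.sum_mul, hmass, one_mul]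

end Fibers

section MixtureMeasure

variable {X ι : Type*} [MeasurableSpace X] [MeasurableSpace ι] {μ : Measure X}
  {ν : Measure (X × ι)}

theorem map_fst_restrict_snd_eq_withDensity {f : X → ℝ} {c : ι} (hf0 : ∀ x, 0 ≤ f x)
    (hf : Integrable f μ)
    (hν : ∀ S, MeasurableSet S → ν (S ×ˢ {c}) = ENNReal.ofReal (∫ x in S, f x ∂μ)) :
    (ν.restrict (Prod.snd ⁻¹' {c})).map Prod.fst =
      μ.withDensity (fun x => ENNReal.ofReal (f x)) := by
  ext S hS
  rw [Measure.map_apply measurable_fst hS, Measure.restrict_apply (measurable_fst hS),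
    withDensity_apply _ hS, ← Set.prod_univ, ← Set.univ_prod, Set.prod_inter_prod,
    Set.inter_univ, Set.univ_inter, hν S hS,
    ofReal_integral_eq_lintegral_ofReal hf.integrableOn (ae_of_all _ hf0)]

theorem setIntegral_snd_eq_integral_mul [MeasurableSingletonClass ι] {f : X → ℝ} {c : ι}
    (hf0 : ∀ x, 0 ≤ f x) (hfm : Measurable f) (hf : Integrable f μ)
    (hν : ∀ S, MeasurableSet S → ν (S ×ˢ {c}) = ENNReal.ofReal (∫ x in S, f x ∂μ))
    {g : X × ι → ℝ} (hg : Measurable g) :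
    ∫ p in Prod.snd ⁻¹' {c}, g p ∂ν = ∫ x, f x * g (x, c) ∂μ := by
  have hgc : Measurable fun x => g (x, c) := hg.comp measurable_prodMk_right
  calc ∫ p in Prod.snd ⁻¹' {c}, g p ∂ν = ∫ p in Prod.snd ⁻¹' {c}, g (p.1, c) ∂ν :=
        setIntegral_congr_fun (measurable_snd (measurableSet_singleton c)) fun p hp => by
          rw [← (hp : p.2 = c)]
    _ = ∫ x, g (x, c) ∂(ν.restrict (Prod.snd ⁻¹' {c})).map Prod.fst :=
        (integral_map measurable_fst.aemeasurable hgc.aestronglyMeasurable).symm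
    _ = ∫ x, f x * g (x, c) ∂μ := by
        rw [map_fst_restrict_snd_eq_withDensity hf0 hf hν,
          integral_withDensity_eq_integral_toReal_smul hfm.ennreal_ofReal
            (ae_of_all _ fun _ => ofReal_lt_top)]
        simp only [ENNReal.toReal_ofReal (hf0 _), smul_eq_mul]

theorem integrable_mul_of_integrableOn_snd [MeasurableSingletonClass ι] {f : X → ℝ} {c : ι}
    (hf0 : ∀ x, 0 ≤ f x) (hfm : Measurable f) (hf : Integrable f μ)
    (hν : ∀ S, MeasurableSet S → ν (S ×ˢ {c}) = ENNReal.ofReal (∫ x in S, f x ∂μ))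
    {g : X × ι → ℝ} (hg : Measurable g) (hgi : IntegrableOn g (Prod.snd ⁻¹' {c}) ν) :
    Integrable (fun x => f x * g (x, c)) μ := by
  have hgc : Measurable fun x => g (x, c) := hg.comp measurable_prodMk_right
  have : Integrable (fun x => g (x, c)) ((ν.restrict (Prod.snd ⁻¹' {c})).map Prod.fst) := by
    rw [integrable_map_measure hgc.aestronglyMeasurable measurable_fst.aemeasurable]
    refine hgi.congr_fun (fun p hp => ?_) (measurable_snd (measurableSet_singleton c))
    simp only [Function.comp]
    rw [← (hp : p.2 = c)]
  rw [map_fst_restrict_snd_eq_withDensity hf0 hf hν,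
    integrable_withDensity_iff_integrable_smul' hfm.ennreal_ofReal
      (ae_of_all _ fun _ => ofReal_lt_top)] at this
  simpa only [ENNReal.toReal_ofReal (hf0 _), smul_eq_mul] using this

theorem integral_eq_integral_sum_mul [Fintype ι] [MeasurableSingletonClass ι] {η : ι → X → ℝ}
    (hη0 : ∀ c x, 0 ≤ η c x) (hηm : ∀ c, Measurable (η c)) (hη : ∀ c, Integrable (η c) μ)
    (hν : ∀ S, MeasurableSet S → ∀ c, ν (S ×ˢ {c}) = ENNReal.ofReal (∫ x in S, η c x ∂μ))
    {g : X × ι → ℝ} (hg : Measurable g) (hgi : Integrable g ν) :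
    ∫ p, g p ∂ν = ∫ x, ∑ c, η c x * g (x, c) ∂μ := by
  rw [integral_eq_sum_setIntegral_preimage_singleton measurable_snd fun c => hgi.integrableOn,
    integral_finsetSum _ fun c _ => integrable_mul_of_integrableOn_snd (hη0 c) (hηm c) (hη c)
      (fun S hS => hν S hS c) hg hgi.integrableOn]
  exact Finset.sum_congr rfl fun c _ =>
    setIntegral_snd_eq_integral_mul (hη0 c) (hηm c) (hη c) (fun S hS => hν S hS c) hg

end MixtureMeasure

theorem sum_mul_le_dist_mul {X ι : Type*} [PseudoMetricSpace X] [Fintype ι] {η : ι → X → ℝ}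
    {ℓ : X → ι → ℝ} {Kη Kℓ : ℝ≥0} {L : ℝ} (hηLip : ∀ c, LipschitzWith Kη (η c))
    (hℓLip : ∀ c, LipschitzWith Kℓ (fun x => ℓ x c)) {x y : X} (hη0 : ∀ c, 0 ≤ η c y)
    (hη1 : ∑ c, η c y = 1) (hℓ0 : ∀ c, 0 ≤ ℓ x c) (hℓL : ∀ c, ℓ x c ≤ L)
    (hℓy : ∀ c, ℓ y c = 0) :
    ∑ c, η c x * ℓ x c ≤ dist x y * (Kℓ + Kη * L * Fintype.card ι) := by
  have hterm : ∀ c, η c x * ℓ x c ≤ η c y * (Kℓ * dist x y) + Kη * dist x y * L := by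
    intro c
    have hℓ : ℓ x c ≤ Kℓ * dist x y := by
      simpa [hℓy c, Real.dist_eq, abs_of_nonneg (hℓ0 c)] using (hℓLip c).dist_le_mul x y
    have hη : η c x - η c y ≤ Kη * dist x y :=
      (le_abs_self _).trans ((hηLip c).dist_le_mul x y)
    calc η c x * ℓ x c = η c y * ℓ x c + (η c x - η c y) * ℓ x c := by ring
      _ ≤ η c y * (Kℓ * dist x y) + Kη * dist x y * L :=
        add_le_add (mul_le_mul_of_nonneg_left hℓ (hη0 c))
          ((mul_le_mul_of_nonneg_right hη (hℓ0 c)).trans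
            (mul_le_mul_of_nonneg_left (hℓL c) (by positivity)))
  calc ∑ c, η c x * ℓ x c ≤ ∑ c, (η c y * (Kℓ * dist x y) + Kη * dist x y * L) :=
        Finset.sum_le_sum fun c _ => hterm c
    _ = dist x y * (Kℓ + Kη * L * Fintype.card ι) := by
        rw [Finset.sum_add_distrib, ← Finset.sum_mul, hη1, Finset.sum_const, Finset.card_univ,
          nsmul_eq_mul]
        ring

theorem integral_sum_mul_le_iSup_mul {X ι κ : Type*} [PseudoMetricSpace X] [MeasurableSpace X]
    [Fintype ι] [Fintype κ] [MeasurableSpace κ] [MeasurableSingletonClass κ] {μ : Measure X}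
    [IsProbabilityMeasure μ] {η : ι → X → ℝ} {ℓ : X → ι → ℝ} {Kη Kℓ L : ℝ≥0}
    (hη0 : ∀ c x, 0 ≤ η c x) (hη1 : ∀ x, ∑ c, η c x = 1) (hηLip : ∀ c, LipschitzWith Kη (η c))
    (hℓ0 : ∀ x c, 0 ≤ ℓ x c) (hℓL : ∀ x c, ℓ x c ≤ L)
    (hℓLip : ∀ c, LipschitzWith Kℓ (fun x => ℓ x c)) {xsel : κ → X}
    (hℓzero : ∀ k c, ℓ (xsel k) c = 0) {π : X → κ} (hπ : Measurable π)
    (hint : ∀ k, IntegrableOn (fun x => dist x (xsel k)) (π ⁻¹' {k}) μ) {δ : κ → ℝ}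
    (hδ : ∀ k, 0 < μ (π ⁻¹' {k}) →
      δ k = (μ (π ⁻¹' {k})).toReal⁻¹ * ∫ x in π ⁻¹' {k}, dist x (xsel k) ∂μ) :
    ∫ x, ∑ c, η c x * ℓ x c ∂μ ≤ (⨆ k, δ k) * (Kℓ + Kη * L * Fintype.card ι) := calc
  ∫ x, ∑ c, η c x * ℓ x c ∂μ ≤ ∫ x, dist x (xsel (π x)) * (Kℓ + Kη * L * Fintype.card ι) ∂μ :=
    integral_mono_of_nonneg
      (ae_of_all _ fun x => Finset.sum_nonneg fun c _ => mul_nonneg (hη0 c x) (hℓ0 x c))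
      ((integrable_comp_of_integrableOn_preimage_singleton hπ hint).mul_const _)
      (ae_of_all _ fun x => sum_mul_le_dist_mul hηLip hℓLip (hη0 · _) (hη1 _) (hℓ0 x) (hℓL x)
        (hℓzero (π x)))
  _ ≤ (⨆ k, δ k) * (Kℓ + Kη * L * Fintype.card ι) := by
    rw [integral_mul_const]
    gcongr
    exact integral_le_iSup_fiberAverage hπ hint hδ

section Hoeffding

variable {Ω ι : Type*} [MeasurableSpace Ω] {P : Measure Ω} [IsProbabilityMeasure P] [Fintype ι]
  {Y : ι → Ω → ℝ} {a b m : ℝ}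

theorem measureReal_sum_sub_ge_le_of_mem_Icc (hind : iIndepFun Y P)
    (hmeas : ∀ i, AEMeasurable (Y i) P) (hY : ∀ i ω, Y i ω ∈ Set.Icc a b) (hm : ∀ i, P[Y i] = m)
    {ε : ℝ} (hε : 0 ≤ ε) :
    P.real {ω | ε ≤ ∑ i, (Y i ω - m)} ≤
      Real.exp (-2 * ε ^ 2 / (Fintype.card ι * (b - a) ^ 2)) := by
  have hsub : ∀ i ∈ Finset.univ,
      HasSubgaussianMGF (fun ω => Y i ω - m) ((‖b - a‖₊ / 2) ^ 2) P :=
    fun i _ => hm i ▸ hasSubgaussianMGF_of_mem_Icc (hmeas i) (ae_of_all _ (hY i))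
  have hind' : iIndepFun (fun i ω => Y i ω - m) P :=
    hind.comp (fun _ y => y - m) fun _ => measurable_sub_const m
  refine (HasSubgaussianMGF.measure_sum_ge_le_of_iIndepFun hind' hsub hε).trans_eq ?_
  simp only [Finset.sum_const, Finset.card_univ, nsmul_eq_mul, NNReal.coe_mul, NNReal.coe_natCast,
    NNReal.coe_pow, NNReal.coe_div, coe_nnnorm, Real.norm_eq_abs, NNReal.coe_ofNat, div_pow, sq_abs]
  congr 1
  generalize (b - a) ^ 2 = s
  ring

theorem ofReal_one_sub_le_measure_mean_le [Nonempty ι] (hind : iIndepFun Y P)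
    (hmeas : ∀ i, AEMeasurable (Y i) P) (hY : ∀ i ω, Y i ω ∈ Set.Icc a b) (hm : ∀ i, P[Y i] = m)
    {γ : ℝ} (hγ0 : 0 < γ) (hγ1 : γ < 1) :
    ENNReal.ofReal (1 - γ) ≤ P {ω | (1 / (Fintype.card ι : ℝ)) * ∑ i, Y i ω ≤
      m + Real.sqrt ((b - a) ^ 2 * Real.log (1 / γ) / (2 * Fintype.card ι))} := by
  set n : ℝ := (Fintype.card ι : ℝ)
  set ε := Real.sqrt ((b - a) ^ 2 * Real.log (1 / γ) / (2 * n))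
  set E := {ω | 1 / n * ∑ i, Y i ω ≤ m + ε}
  have hn : 0 < n := by positivity
  -- For `a = b` the Hoeffding exponent divides by zero and the bound is `1`; but then each `Y i`
  -- is the constant `m`.
  rcases eq_or_ne a b with rfl | hab
  · have hYa : ∀ i ω, Y i ω = a := fun i ω => le_antisymm (hY i ω).2 (hY i ω).1
    have hma : m = a := by
      obtain ⟨i⟩ := ‹Nonempty ι›
      rw [← hm i, funext (hYa i), integral_const, probReal_univ, one_smul]
    have hE : E = Set.univ := Set.eq_univ_of_forall fun ω => by
      simp [E, ε, hYa, hma, n, hn.ne']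
    simp [hE, hγ0.le]
  have hlog : 0 ≤ Real.log (1 / γ) := Real.log_nonneg (by rw [le_div_iff₀ hγ0]; linarith)
  have hε2 : ε ^ 2 = (b - a) ^ 2 * Real.log (1 / γ) / (2 * n) :=
    Real.sq_sqrt (by positivity)
  have hcompl : Eᶜ ⊆ {ω | n * ε ≤ ∑ i, (Y i ω - m)} := by
    intro ω hω
    simp only [E, Set.mem_compl_iff, Set.mem_ofPred_eq, not_le] at hω
    rw [Set.mem_ofPred_eq, Finset.sum_sub_distrib, Finset.sum_const, Finset.card_univ,
      nsmul_eq_mul]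
    rw [one_div, ← div_eq_inv_mul, lt_div_iff₀ hn] at hω
    linarith
  have htail : P.real {ω | n * ε ≤ ∑ i, (Y i ω - m)} ≤ γ := by
    have hba : (b - a) ^ 2 ≠ 0 := pow_ne_zero 2 (sub_ne_zero.2 hab.symm)
    have hexp : -2 * (n * ε) ^ 2 / (n * (b - a) ^ 2) = Real.log γ := by
      rw [mul_pow, hε2, one_div, Real.log_inv]
      field_simp
    refine (measureReal_sum_sub_ge_le_of_mem_Icc hind hmeas hY hm (by positivity)).trans_eq ?_
    change Real.exp (-2 * (n * ε) ^ 2 / (n * (b - a) ^ 2)) = γ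
    rw [hexp, Real.exp_log hγ0]
  have hPEc : P Eᶜ ≤ ENNReal.ofReal γ :=
    (measure_mono hcompl).trans <| by
      rw [← ofReal_measureReal]
      exact ENNReal.ofReal_le_ofReal htail
  calc ENNReal.ofReal (1 - γ) = 1 - ENNReal.ofReal γ := by
        rw [ENNReal.ofReal_sub _ hγ0.le, ENNReal.ofReal_one]
    _ ≤ P E := by
        rw [tsub_le_iff_right]
        calc 1 = P Set.univ := measure_univ.symm
          _ ≤ P E + P Eᶜ := measure_univ_le_add_compl E
          _ ≤ P E + ENNReal.ofReal γ := by gcongr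

end Hoeffding

theorem tighter_coreset_loss_bound_general
    {X : Type*} [MetricSpace X] [MeasurableSpace X] [BorelSpace X]
    (μ : Measure X) [IsProbabilityMeasure μ]
    (b : ℕ) (xsel : Fin b → X)
    (C : ℕ)
    (η : Fin C → X → ℝ) (lEta : ℝ≥0)
    (hη0 : ∀ c x, 0 ≤ η c x) (hη1 : ∀ x, ∑ c, η c x = 1)
    (hηLip : ∀ c, LipschitzWith lEta (η c))
    (ℓ : X → Fin C → ℝ) (L lLoss : ℝ≥0)
    (hℓ0 : ∀ x c, 0 ≤ ℓ x c) (hℓL : ∀ x c, ℓ x c ≤ (L : ℝ))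
    (hℓLip : ∀ c, LipschitzWith lLoss (fun x => ℓ x c))
    (hℓzero : ∀ k c, ℓ (xsel k) c = 0)
    (ν : Measure (X × Fin C)) [IsProbabilityMeasure ν]
    (hν : ∀ S : Set X, MeasurableSet S → ∀ c : Fin C,
      ν (S ×ˢ ({c} : Set (Fin C))) = ENNReal.ofReal (∫ x in S, η c x ∂μ))
    -- the measurable nearest-point selector and its coverage areas
    (π : X → Fin b) (hπmeas : Measurable π)
    -- the average radial distances (assumed finite, i.e. given by integrable functions)
    (δs : Fin b → ℝ)
    (hδs_int : ∀ k, IntegrableOn (fun x => dist x (xsel k)) (π ⁻¹' {k}) μ)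
    (hδs_pos : ∀ k, 0 < μ (π ⁻¹' {k}) →
      δs k = (μ (π ⁻¹' {k})).toReal⁻¹ * ∫ x in π ⁻¹' {k}, dist x (xsel k) ∂μ)
    {Ω : Type*} [MeasurableSpace Ω] (P : Measure Ω) [IsProbabilityMeasure P]
    (n : ℕ) (hn : 0 < n)
    (W : Fin n → Ω → X × Fin C) (hWmeas : ∀ t, Measurable (W t))
    (hWindep : iIndepFun W P)
    (hWlaw : ∀ t, Measure.map (W t) P = ν)
    (γ : ℝ) (hγ0 : 0 < γ) (hγ1 : γ < 1) :
    ENNReal.ofReal (1 - γ) ≤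
      P {ω | (1 / (n : ℝ)) * ∑ t, ℓ (W t ω).1 (W t ω).2 ≤
        (⨆ k : Fin b, δs k) * ((lLoss : ℝ) + (lEta : ℝ) * (L : ℝ) * (C : ℝ))
          + Real.sqrt ((L : ℝ) ^ 2 * Real.log (1 / γ) / (2 * n))} := by
  set f : X × Fin C → ℝ := fun p => ℓ p.1 p.2
  have hfm : Measurable f :=
    measurable_from_prod_countable_left fun c => (hℓLip c).continuous.measurable
  have hfI : ∀ p, f p ∈ Set.Icc 0 (L : ℝ) := fun p => ⟨hℓ0 _ _, hℓL _ _⟩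
  have hη : ∀ c, Integrable (η c) μ := fun c =>
    Integrable.of_mem_Icc 0 1 (hηLip c).continuous.aemeasurable (ae_of_all _ fun x =>
      ⟨hη0 c x, hη1 x ▸ Finset.single_le_sum (fun c' _ => hη0 c' x) (Finset.mem_univ c)⟩)
  have hmean : ∫ p, f p ∂ν ≤ (⨆ k, δs k) * (lLoss + lEta * L * C) := by
    rw [integral_eq_integral_sum_mul hη0 (fun c => (hηLip c).continuous.measurable) hη hν hfm
      (Integrable.of_mem_Icc 0 L hfm.aemeasurable (ae_of_all _ hfI))]
    simpa only [Fintype.card_fin] using integral_sum_mul_le_iSup_mul hη0 hη1 hηLip hℓ0 hℓL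
      hℓLip hℓzero hπmeas hδs_int hδs_pos
  have : Nonempty (Fin n) := Fin.pos_iff_nonempty.1 hn
  have hconc := ofReal_one_sub_le_measure_mean_le (Y := fun t ω => f (W t ω))
    (m := ∫ p, f p ∂ν) (hWindep.comp (fun _ => f) fun _ => hfm)
    (fun t => (hfm.comp (hWmeas t)).aemeasurable) (fun t ω => hfI _)
    (fun t => by rw [← hWlaw t, integral_map (hWmeas t).aemeasurable hfm.aestronglyMeasurable])
    hγ0 hγ1
  refine hconc.trans (measure_mono fun ω hω => ?_)
  simp only [Fintype.card_fin, sub_zero, Set.mem_ofPred_eq] at hω ⊢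
  linarith

/-- **Tighter Core-set loss bound via average radial distances (Theorem 2).**
With a measurable nearest-point selector `π` and average radial distances `δs k`, for i.i.d.
samples `W t` with law `ν`, with probability at least `1 - γ` the empirical loss is bounded by
`(max_k δs k) · (lLoss + lEta·L·C) + √(L²·log(1/γ)/(2n))`. -/
theorem tighter_coreset_loss_bound
    {X : Type*} [MetricSpace X] [MeasurableSpace X] [BorelSpace X]
    (μ : Measure X) [IsProbabilityMeasure μ]
    (b : ℕ) (hb : 0 < b) (xsel : Fin b → X)
    (C : ℕ) (hC : 0 < C)
    (η : Fin C → X → ℝ) (lEta : ℝ≥0)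
    (hη0 : ∀ c x, 0 ≤ η c x) (hη1 : ∀ x, ∑ c, η c x = 1)
    (hηLip : ∀ c, LipschitzWith lEta (η c))
    (ℓ : X → Fin C → ℝ) (L lLoss : ℝ≥0)
    (hℓ0 : ∀ x c, 0 ≤ ℓ x c) (hℓL : ∀ x c, ℓ x c ≤ (L : ℝ))
    (hℓLip : ∀ c, LipschitzWith lLoss (fun x => ℓ x c))
    (hℓzero : ∀ k c, ℓ (xsel k) c = 0)
    (ν : Measure (X × Fin C)) [IsProbabilityMeasure ν]
    (hν : ∀ S : Set X, MeasurableSet S → ∀ c : Fin C,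
      ν (S ×ˢ ({c} : Set (Fin C))) = ENNReal.ofReal (∫ x in S, η c x ∂μ))
    -- the measurable nearest-point selector and its coverage areas
    (π : X → Fin b) (hπmeas : Measurable π)
    (hπ : ∀ x, dist x (xsel (π x)) = ⨅ k : Fin b, dist x (xsel k))
    -- the average radial distances (assumed finite, i.e. given by integrable functions)
    (δs : Fin b → ℝ)
    (hδs_int : ∀ k, IntegrableOn (fun x => dist x (xsel k)) (π ⁻¹' {k}) μ)
    (hδs_pos : ∀ k, 0 < μ (π ⁻¹' {k}) →
      δs k = (μ (π ⁻¹' {k})).toReal⁻¹ * ∫ x in π ⁻¹' {k}, dist x (xsel k) ∂μ)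
    (hδs_zero : ∀ k, ¬ 0 < μ (π ⁻¹' {k}) → δs k = 0)
    {Ω : Type*} [MeasurableSpace Ω] (P : Measure Ω) [IsProbabilityMeasure P]
    (n : ℕ) (hn : 0 < n)
    (W : Fin n → Ω → X × Fin C) (hWmeas : ∀ t, Measurable (W t))
    (hWindep : iIndepFun W P)
    (hWlaw : ∀ t, Measure.map (W t) P = ν)
    (γ : ℝ) (hγ0 : 0 < γ) (hγ1 : γ < 1) :
    ENNReal.ofReal (1 - γ) ≤
      P {ω | (1 / (n : ℝ)) * ∑ t, ℓ (W t ω).1 (W t ω).2 ≤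
        (⨆ k : Fin b, δs k) * ((lLoss : ℝ) + (lEta : ℝ) * (L : ℝ) * (C : ℝ))
          + Real.sqrt ((L : ℝ) ^ 2 * Real.log (1 / γ) / (2 * n))} :=
  tighter_coreset_loss_bound_general μ b xsel C η lEta hη0 hη1 hηLip ℓ L lLoss hℓ0 hℓL hℓLip hℓzero
    ν hν π hπmeas δs hδs_int hδs_pos P n hn W hWmeas hWindep hWlaw γ hγ0 hγ1
end

section
/- Expected-loss bound by the maximum average radial distance (the deterministic core of Theorem 2). Let π : X → Fin b be a measurable nearest-point selector, i.e. dist(x, x̃(π x)) = min_{k∈Fin b} dist(x, x̃ k) for every x ∈ X, with coverage areas N(k) = π⁻¹{k}, and define δ_s(k) = (μ(N(k)))⁻¹ ∫_{N(k)} dist(x, x̃ k) dμ(x) if μ(N(k)) > 0 and δ_s(k) = 0 otherwise; assume each δ_s(k) is finite. Then ∫_{X × Fin C} ℓ(w.1, w.2) dν(w) ≤ (λl + λη·L·C) · max_{k∈Fin b} δ_s(k). -/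
open MeasureTheory ENNReal
open scoped NNReal

/-! Since `ℓ (x̃ k) c = 0` and `ℓ (·, c)` is `λl`-Lipschitz, `|ℓ x c| ≤ λl · dist x (x̃ (π x))`.
The densities `η c` sum to one, so the first marginal of `ν` is `μ`, and the expected loss is at
most `λl · ∫ dist x (x̃ (π x)) dμ`. Split over the coverage areas, this integral is the convex
combination `∑ k, μ (N k) · δ_s k` of the average radial distances, hence at most their maximum. -/

lemma iUnion_preimage_singleton_eq_univ {X ι : Type*} (π : X → ι) :
    ⋃ k, π ⁻¹' {k} = Set.univ := by
  ext x; simp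

section Fibers

variable {X ι E : Type*} [MeasurableSpace X] [Fintype ι] [MeasurableSpace ι]
  [MeasurableSingletonClass ι] [NormedAddCommGroup E] {μ : Measure X} {π : X → ι}

lemma integrable_of_integrableOn_fiber (hπ : Measurable π) {F : X → ι → E}
    (hF : ∀ k, IntegrableOn (F · k) (π ⁻¹' {k}) μ) : Integrable (fun x => F x (π x)) μ := by
  rw [← integrableOn_univ, ← iUnion_preimage_singleton_eq_univ π, integrableOn_finite_iUnion]
  refine fun k => (hF k).congr_fun (fun x hx => ?_) (hπ (measurableSet_singleton k))
  rw [Set.mem_preimage.mp hx]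

lemma integral_eq_sum_setIntegral_fiber [NormedSpace ℝ E] (hπ : Measurable π) {F : X → ι → E}
    (hF : ∀ k, IntegrableOn (F · k) (π ⁻¹' {k}) μ) :
    ∫ x, F x (π x) ∂μ = ∑ k, ∫ x in π ⁻¹' {k}, F x k ∂μ := by
  have hfib : ∀ k, MeasurableSet (π ⁻¹' {k}) := fun k => hπ (measurableSet_singleton k)
  have hint := integrable_of_integrableOn_fiber hπ hF
  rw [← setIntegral_univ, ← iUnion_preimage_singleton_eq_univ π,
    integral_iUnion_fintype hfib (pairwise_disjoint_fiber π) fun k => hint.integrableOn]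
  refine Finset.sum_congr rfl fun k _ => setIntegral_congr_fun (hfib k) fun x hx => ?_
  rw [Set.mem_preimage.mp hx]

lemma integral_le_iSup_setAverage_fiber [IsProbabilityMeasure μ] (hπ : Measurable π)
    {F : X → ι → ℝ} (hF : ∀ k, IntegrableOn (F · k) (π ⁻¹' {k}) μ) :
    ∫ x, F x (π x) ∂μ ≤ ⨆ k, ⨍ x in π ⁻¹' {k}, F x k ∂μ := by
  set M := ⨆ k, ⨍ x in π ⁻¹' {k}, F x k ∂μ
  have hmass : ∑ k, μ.real (π ⁻¹' {k}) = 1 := by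
    rw [sum_measureReal_preimage_singleton _ fun k _ => hπ (measurableSet_singleton k),
      Finset.coe_univ, Set.preimage_univ, probReal_univ]
  calc ∫ x, F x (π x) ∂μ
      = ∑ k, μ.real (π ⁻¹' {k}) * ⨍ x in π ⁻¹' {k}, F x k ∂μ := by
        rw [integral_eq_sum_setIntegral_fiber hπ hF]
        exact Finset.sum_congr rfl fun k _ => (measure_smul_setAverage _ (measure_ne_top _ _)).symm
    _ ≤ ∑ k, μ.real (π ⁻¹' {k}) * M := by
        gcongr with k
        exact le_ciSup (Set.finite_range fun k => ⨍ x in π ⁻¹' {k}, F x k ∂μ).bddAbove k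
    _ = M := by rw [← Finset.sum_mul, hmass, one_mul]

end Fibers

lemma integral_le_integral_of_abs_le_comp {Y X : Type*} [MeasurableSpace Y] [MeasurableSpace X]
    {ν : Measure Y} {μ : Measure X} {φ : Y → X} (hφ : Measurable φ) (hν : ν.map φ = μ)
    {f : Y → ℝ} (hf : AEStronglyMeasurable f ν) {g : X → ℝ} (hg : Integrable g μ)
    (hfg : ∀ y, |f y| ≤ g (φ y)) : ∫ y, f y ∂ν ≤ ∫ x, g x ∂μ := by
  subst hν
  have hgφ : Integrable (g ∘ φ) ν := hg.comp_measurable hφ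
  rw [integral_map hφ.aemeasurable hg.aestronglyMeasurable]
  exact integral_mono (hgφ.mono' hf (.of_forall hfg)) hgφ fun y => (le_abs_self _).trans (hfg y)

lemma map_fst_eq_of_measure_prod_singleton {X ι : Type*} [MeasurableSpace X] [Fintype ι]
    [MeasurableSpace ι] [MeasurableSingletonClass ι] {μ : Measure X} [IsFiniteMeasure μ]
    {ν : Measure (X × ι)} {η : ι → X → ℝ} (hη0 : ∀ c x, 0 ≤ η c x) (hη1 : ∀ x, ∑ c, η c x = 1)
    (hηm : ∀ c, Measurable (η c))
    (hν : ∀ S : Set X, MeasurableSet S → ∀ c : ι,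
      ν (S ×ˢ ({c} : Set ι)) = ENNReal.ofReal (∫ x in S, η c x ∂μ)) :
    ν.map Prod.fst = μ := by
  have hηint : ∀ c, Integrable (η c) μ := fun c =>
    (integrable_const (1 : ℝ)).mono' (hηm c).aestronglyMeasurable <| .of_forall fun x => by
      rw [Real.norm_of_nonneg (hη0 c x), ← hη1 x]
      exact Finset.single_le_sum (fun c' _ => hη0 c' x) (Finset.mem_univ c)
  ext S hS
  have hslices : Prod.fst ⁻¹' S = ⋃ c : ι, S ×ˢ ({c} : Set ι) := by ext; simp
  rw [Measure.map_apply measurable_fst hS, hslices,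
    measure_iUnion (fun i j hij => Set.disjoint_prod.2 (.inr (Set.disjoint_singleton.2 hij)))
      (fun c => hS.prod (measurableSet_singleton c)), tsum_fintype]
  simp only [hν S hS]
  rw [← ENNReal.ofReal_sum_of_nonneg fun c _ => setIntegral_nonneg hS fun x _ => hη0 c x,
    ← integral_finsetSum _ fun c _ => (hηint c).integrableOn]
  simp only [hη1, setIntegral_const, smul_eq_mul, mul_one, measureReal_def]
  exact ENNReal.ofReal_toReal (measure_ne_top μ S)

theorem expected_loss_le_max_average_radial_distance_general
    {X : Type*} [MetricSpace X] [MeasurableSpace X] [BorelSpace X]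
    (μ : Measure X) [IsProbabilityMeasure μ]
    (b : ℕ) (xsel : Fin b → X)
    (C : ℕ)
    (η : Fin C → X → ℝ) (lEta : ℝ≥0)
    (hη0 : ∀ c x, 0 ≤ η c x) (hη1 : ∀ x, ∑ c, η c x = 1)
    (hηLip : ∀ c, LipschitzWith lEta (η c))
    (ℓ : X → Fin C → ℝ) (L lLoss : ℝ≥0)
    (hℓLip : ∀ c, LipschitzWith lLoss (fun x => ℓ x c))
    (hℓzero : ∀ k c, ℓ (xsel k) c = 0)
    (ν : Measure (X × Fin C))
    (hν : ∀ S : Set X, MeasurableSet S → ∀ c : Fin C,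
      ν (S ×ˢ ({c} : Set (Fin C))) = ENNReal.ofReal (∫ x in S, η c x ∂μ))
    -- the measurable nearest-point selector and its coverage areas
    (π : X → Fin b) (hπmeas : Measurable π)
    -- the average radial distances (assumed finite)
    (δs : Fin b → ℝ)
    (hδs_int : ∀ k, IntegrableOn (fun x => dist x (xsel k)) (π ⁻¹' {k}) μ)
    (hδs_pos : ∀ k, 0 < μ (π ⁻¹' {k}) →
      δs k = (μ (π ⁻¹' {k})).toReal⁻¹ * ∫ x in π ⁻¹' {k}, dist x (xsel k) ∂μ)
    (hδs_zero : ∀ k, ¬ 0 < μ (π ⁻¹' {k}) → δs k = 0) :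
    (∫ w, ℓ w.1 w.2 ∂ν)
      ≤ ((lLoss : ℝ) + (lEta : ℝ) * (L : ℝ) * (C : ℝ)) * ⨆ k : Fin b, δs k := by
  have hδs : ∀ k, δs k = ⨍ x in π ⁻¹' {k}, dist x (xsel k) ∂μ := fun k => by
    by_cases hk : 0 < μ (π ⁻¹' {k})
    · rw [hδs_pos k hk, setAverage_eq, smul_eq_mul, measureReal_def]
    · rw [hδs_zero k hk, Measure.restrict_eq_zero.2 (nonpos_iff_eq_zero.1 (not_lt.1 hk)),
        average_zero_measure]
  have hδs_nonneg : 0 ≤ ⨆ k, δs k := Real.iSup_nonneg fun k => by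
    rw [hδs k, setAverage_eq]
    exact smul_nonneg (inv_nonneg.2 measureReal_nonneg) (integral_nonneg fun x => dist_nonneg)
  have hmarg : ν.map Prod.fst = μ :=
    map_fst_eq_of_measure_prod_singleton hη0 hη1 (fun c => (hηLip c).continuous.measurable) hν
  have hℓ_le : ∀ x c, |ℓ x c| ≤ lLoss * dist x (xsel (π x)) := fun x c => by
    simpa [Real.dist_eq, hℓzero] using (hℓLip c).dist_le_mul x (xsel (π x))
  have hℓ_meas : Measurable fun w : X × Fin C => ℓ w.1 w.2 :=
    measurable_from_prod_countable_left fun c => (hℓLip c).continuous.measurable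
  calc ∫ w, ℓ w.1 w.2 ∂ν
      ≤ ∫ x, lLoss * dist x (xsel (π x)) ∂μ :=
        integral_le_integral_of_abs_le_comp measurable_fst hmarg hℓ_meas.aestronglyMeasurable
          ((integrable_of_integrableOn_fiber hπmeas hδs_int).const_mul _) fun w => hℓ_le w.1 w.2
    _ = lLoss * ∫ x, dist x (xsel (π x)) ∂μ := integral_const_mul _ _
    _ ≤ lLoss * ⨆ k, δs k := by
        gcongr
        simpa only [hδs] using integral_le_iSup_setAverage_fiber hπmeas hδs_int
    _ ≤ _ := by
        gcongr
        exact le_add_of_nonneg_right (by positivity)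

/-- **Expected-loss bound by the maximum average radial distance
(the deterministic core of Theorem 2).**
`∫ w, ℓ w.1 w.2 ∂ν ≤ (lLoss + lEta·L·C) · max_k δs k`. -/
theorem expected_loss_le_max_average_radial_distance
    {X : Type*} [MetricSpace X] [MeasurableSpace X] [BorelSpace X]
    (μ : Measure X) [IsProbabilityMeasure μ]
    (b : ℕ) (hb : 0 < b) (xsel : Fin b → X)
    (C : ℕ) (hC : 0 < C)
    (η : Fin C → X → ℝ) (lEta : ℝ≥0)
    (hη0 : ∀ c x, 0 ≤ η c x) (hη1 : ∀ x, ∑ c, η c x = 1)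
    (hηLip : ∀ c, LipschitzWith lEta (η c))
    (ℓ : X → Fin C → ℝ) (L lLoss : ℝ≥0)
    (hℓ0 : ∀ x c, 0 ≤ ℓ x c) (hℓL : ∀ x c, ℓ x c ≤ (L : ℝ))
    (hℓLip : ∀ c, LipschitzWith lLoss (fun x => ℓ x c))
    (hℓzero : ∀ k c, ℓ (xsel k) c = 0)
    (ν : Measure (X × Fin C)) [IsProbabilityMeasure ν]
    (hν : ∀ S : Set X, MeasurableSet S → ∀ c : Fin C,
      ν (S ×ˢ ({c} : Set (Fin C))) = ENNReal.ofReal (∫ x in S, η c x ∂μ))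
    -- the measurable nearest-point selector and its coverage areas
    (π : X → Fin b) (hπmeas : Measurable π)
    (hπ : ∀ x, dist x (xsel (π x)) = ⨅ k : Fin b, dist x (xsel k))
    -- the average radial distances (assumed finite)
    (δs : Fin b → ℝ)
    (hδs_int : ∀ k, IntegrableOn (fun x => dist x (xsel k)) (π ⁻¹' {k}) μ)
    (hδs_pos : ∀ k, 0 < μ (π ⁻¹' {k}) →
      δs k = (μ (π ⁻¹' {k})).toReal⁻¹ * ∫ x in π ⁻¹' {k}, dist x (xsel k) ∂μ)
    (hδs_zero : ∀ k, ¬ 0 < μ (π ⁻¹' {k}) → δs k = 0) :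
    (∫ w, ℓ w.1 w.2 ∂ν)
      ≤ ((lLoss : ℝ) + (lEta : ℝ) * (L : ℝ) * (C : ℝ)) * ⨆ k : Fin b, δs k :=
  expected_loss_le_max_average_radial_distance_general μ b xsel C η lEta hη0 hη1 hηLip ℓ L lLoss
    hℓLip hℓzero ν hν π hπmeas δs hδs_int hδs_pos hδs_zero
end

section
/- Expected-loss bound by the covering radius (the deterministic core of Theorem 1). Assume the covering radius δ = sup_{x∈X} min_{k∈Fin b} dist(x, x̃ k) is finite. Then ∫_{X × Fin C} ℓ(w.1, w.2) dν(w) ≤ (λl + λη·L·C) · δ. -/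
open MeasureTheory ENNReal
open scoped NNReal

/-- **Expected-loss bound by the covering radius (the deterministic core of Theorem 1).**
If the covering radius `δ = ⨆ x, ⨅ k, edist x (xsel k)` is finite, then
`∫ w, ℓ w.1 w.2 ∂ν ≤ (lLoss + lEta·L·C) · δ`. -/
theorem expected_loss_le_covering_radius
    {X : Type*} [MetricSpace X] [MeasurableSpace X] [BorelSpace X]
    (μ : Measure X) [IsProbabilityMeasure μ]
    (b : ℕ) (hb : 0 < b) (xsel : Fin b → X)
    (C : ℕ) (hC : 0 < C)
    (η : Fin C → X → ℝ) (lEta : ℝ≥0)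
    (hη0 : ∀ c x, 0 ≤ η c x) (hη1 : ∀ x, ∑ c, η c x = 1)
    (hηLip : ∀ c, LipschitzWith lEta (η c))
    (ℓ : X → Fin C → ℝ) (L lLoss : ℝ≥0)
    (hℓ0 : ∀ x c, 0 ≤ ℓ x c) (hℓL : ∀ x c, ℓ x c ≤ (L : ℝ))
    (hℓLip : ∀ c, LipschitzWith lLoss (fun x => ℓ x c))
    (hℓzero : ∀ k c, ℓ (xsel k) c = 0)
    (ν : Measure (X × Fin C)) [IsProbabilityMeasure ν]
    (hν : ∀ S : Set X, MeasurableSet S → ∀ c : Fin C,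
      ν (S ×ˢ ({c} : Set (Fin C))) = ENNReal.ofReal (∫ x in S, η c x ∂μ))
    (hδfin : (⨆ x : X, ⨅ k : Fin b, edist x (xsel k)) ≠ ⊤) :
    (∫ w, ℓ w.1 w.2 ∂ν)
      ≤ ((lLoss : ℝ) + (lEta : ℝ) * (L : ℝ) * (C : ℝ))
          * (⨆ x : X, ⨅ k : Fin b, edist x (xsel k)).toReal := by
  set δ := ⨆ x : X, ⨅ k : Fin b, edist x (xsel k) with hδ
  have hb' : Nonempty (Fin b) := ⟨⟨0, hb⟩⟩
  -- pointwise bound: ℓ x c ≤ lLoss * δ.toReal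
  have hpt : ∀ (x : X) (c : Fin C), ℓ x c ≤ (lLoss : ℝ) * δ.toReal := by
    intro x c
    obtain ⟨k, hk⟩ := Finite.exists_min (fun k : Fin b => edist x (xsel k))
    have hle : edist x (xsel k) ≤ δ := by
      refine le_trans ?_ (le_iSup (fun x : X => ⨅ k : Fin b, edist x (xsel k)) x)
      exact le_iInf hk
    have hfin : edist x (xsel k) ≠ ⊤ := ne_top_of_le_ne_top hδfin hle
    have hdist : dist x (xsel k) ≤ δ.toReal := by
      rw [dist_edist]
      exact ENNReal.toReal_mono hδfin hle
    have := (hℓLip c).dist_le_mul x (xsel k)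
    rw [hℓzero k c, dist_zero_right, Real.norm_eq_abs] at this
    calc ℓ x c ≤ |ℓ x c| := le_abs_self _
      _ ≤ (lLoss : ℝ) * dist x (xsel k) := this
      _ ≤ (lLoss : ℝ) * δ.toReal :=
          mul_le_mul_of_nonneg_left hdist lLoss.coe_nonneg
  -- measurability
  have hmeas : Measurable (fun w : X × Fin C => ℓ w.1 w.2) := by
    apply measurable_from_prod_countable_left
    intro c
    exact (hℓLip c).continuous.measurable
  have hint : Integrable (fun w : X × Fin C => ℓ w.1 w.2) ν := by
    refine (integrable_const ((lLoss : ℝ) * δ.toReal)).mono'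
      hmeas.aestronglyMeasurable ?_
    filter_upwards with w
    rw [Real.norm_eq_abs, abs_of_nonneg (hℓ0 _ _)]
    exact hpt w.1 w.2
  have h1 : (∫ w, ℓ w.1 w.2 ∂ν) ≤ (lLoss : ℝ) * δ.toReal := by
    calc (∫ w, ℓ w.1 w.2 ∂ν) ≤ ∫ _, (lLoss : ℝ) * δ.toReal ∂ν :=
          integral_mono hint (integrable_const _) (fun w => hpt w.1 w.2)
      _ = (lLoss : ℝ) * δ.toReal := by simp
  refine h1.trans ?_
  have hδ0 : 0 ≤ δ.toReal := ENNReal.toReal_nonneg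
  have : (0:ℝ) ≤ (lEta : ℝ) * (L : ℝ) * (C : ℝ) := by positivity
  nlinarith
end
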